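/- Let X be a random vector in ℝⁿ distributed according to μ. Then for every x ∈ ℝⁿ, Λ*_X(x) = sup over unit vectors ξ of Λ*_{⟨X,ξ⟩}(⟨x,ξ⟩), where Λ*_{⟨X,ξ⟩} is the Cramér transform of the one-dimensional marginal ⟨X,ξ⟩. -/

import Mathlib

open scoped Classical
open MeasureTheory Real Set

/-- The cumulant generating function (log-Laplace transform) of a measure on `ℝⁿ`,
with value `⊤` when the exponential moment is infinite. -/
noncomputable def logLaplace {n : ℕ} (μ : Measure (EuclideanSpace ℝ (Fin n)))
    (ξ : EuclideanSpace ℝ (Fin n)) : EReal :=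
  if Integrable (fun y => Real.exp (inner ℝ y ξ : ℝ)) μ then
    ((Real.log (∫ y, Real.exp ((inner ℝ y ξ : ℝ)) ∂μ) : ℝ) : EReal)
  else ⊤

/-- The Cramér transform `Λ*_μ(x) = sup_ξ (⟨x,ξ⟩ − Λ_μ(ξ))`, with values in `EReal`. -/
noncomputable def cramerE {n : ℕ} (μ : Measure (EuclideanSpace ℝ (Fin n)))
    (x : EuclideanSpace ℝ (Fin n)) : EReal :=
  ⨆ ξ : EuclideanSpace ℝ (Fin n), (((inner ℝ x ξ : ℝ) : EReal) - logLaplace μ ξ)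

/-- The cumulant generating function of a measure on `ℝ`. -/
noncomputable def logLaplace1 (ν : Measure ℝ) (t : ℝ) : EReal :=
  if Integrable (fun y => Real.exp (t * y)) ν then
    ((Real.log (∫ y, Real.exp (t * y) ∂ν) : ℝ) : EReal)
  else ⊤

/-- The Cramér transform of a measure on `ℝ`, with values in `EReal`. -/
noncomputable def cramerE1 (ν : Measure ℝ) (s : ℝ) : EReal :=
  ⨆ t : ℝ, (((s * t : ℝ) : EReal) - logLaplace1 ν t)

/-!
Since `⟨x, t • u⟩ = t ⟨x, u⟩`, the log-Laplace transform of the marginal `⟨X, u⟩` at `t` is that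
of `X` at `t • u`, so the Cramér transform of the marginal at `⟨x, u⟩` is the supremum defining
`Λ*_X(x)` restricted to the line `ℝ u`. Every vector lies on the line through some unit vector,
so taking the supremum over all unit vectors recovers `Λ*_X(x)`.
-/

lemma exists_norm_eq_one_smul_eq {E : Type*} [NormedAddCommGroup E] [NormedSpace ℝ E]
    [Nontrivial E] (ξ : E) : ∃ u : E, ‖u‖ = 1 ∧ ‖ξ‖ • u = ξ := by
  by_cases hξ : ξ = 0
  · obtain ⟨u, hu⟩ := (NormedSpace.sphere_nonempty (x := (0 : E)) (r := 1)).mpr zero_le_one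
    exact ⟨u, by simpa using hu, by simp [hξ]⟩
  · refine ⟨‖ξ‖⁻¹ • ξ, norm_smul_inv_norm hξ, ?_⟩
    rw [smul_smul, mul_inv_cancel₀ (norm_ne_zero_iff.mpr hξ), one_smul]

lemma iSup_eq_iSup_norm_eq_one_iSup_smul {E α : Type*} [NormedAddCommGroup E] [NormedSpace ℝ E]
    [Nontrivial E] [CompleteLattice α] (f : E → α) :
    ⨆ ξ, f ξ = ⨆ u : {u : E // ‖u‖ = 1}, ⨆ t : ℝ, f (t • u.1) := by
  refine le_antisymm (iSup_le fun ξ => ?_) (iSup_le fun u => iSup_le fun t => le_iSup f _)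
  obtain ⟨u, hu, hξ⟩ := exists_norm_eq_one_smul_eq ξ
  refine le_iSup_of_le (⟨u, hu⟩ : {u : E // ‖u‖ = 1}) ?_
  exact hξ ▸ le_iSup (fun t : ℝ => f (t • u)) ‖ξ‖

lemma logLaplace1_map_inner {n : ℕ} (μ : Measure (EuclideanSpace ℝ (Fin n)))
    (u : EuclideanSpace ℝ (Fin n)) (t : ℝ) :
    logLaplace1 (μ.map fun y => (inner ℝ y u : ℝ)) t = logLaplace μ (t • u) := by
  have h_inner : Measurable fun y : EuclideanSpace ℝ (Fin n) => (inner ℝ y u : ℝ) :=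
    (continuous_id.inner continuous_const).measurable
  have h_exp : AEStronglyMeasurable (fun s : ℝ => Real.exp (t * s))
      (μ.map fun y => (inner ℝ y u : ℝ)) :=
    (Real.continuous_exp.comp (continuous_const.mul continuous_id)).aestronglyMeasurable
  have h_smul : ∀ y : EuclideanSpace ℝ (Fin n), (inner ℝ y (t • u) : ℝ) = t * inner ℝ y u :=
    fun y => real_inner_smul_right y u t
  have h_integrable := integrable_map_measure h_exp h_inner.aemeasurable
  have h_integral := integral_map h_inner.aemeasurable h_exp
  simp only [Function.comp_def] at h_integrable
  simp only [logLaplace1, logLaplace, h_integrable, h_integral, h_smul]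

lemma cramerE1_map_inner {n : ℕ} (μ : Measure (EuclideanSpace ℝ (Fin n)))
    (x u : EuclideanSpace ℝ (Fin n)) :
    cramerE1 (μ.map fun y => (inner ℝ y u : ℝ)) (inner ℝ x u) =
      ⨆ t : ℝ, (((inner ℝ x (t • u) : ℝ) : EReal) - logLaplace μ (t • u)) := by
  simp only [cramerE1, logLaplace1_map_inner, real_inner_smul_right, mul_comm]

theorem cramer_eq_sup_marginals_general {n : ℕ} (hn : 0 < n) {Ω : Type*} [MeasurableSpace Ω]
    (ℙ : Measure Ω) (X : Ω → EuclideanSpace ℝ (Fin n))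
    (hX : Measurable X) :
    ∀ x : EuclideanSpace ℝ (Fin n),
      cramerE (ℙ.map X) x =
        ⨆ ξ : {ξ : EuclideanSpace ℝ (Fin n) // ‖ξ‖ = 1},
          cramerE1 (ℙ.map fun ω => (inner ℝ (X ω) ξ.1 : ℝ)) (inner ℝ x ξ.1 : ℝ) := by
  intro x
  have : Nonempty (Fin n) := ⟨⟨0, hn⟩⟩
  have h_marginal : ∀ u : EuclideanSpace ℝ (Fin n),
      ℙ.map (fun ω => (inner ℝ (X ω) u : ℝ)) = (ℙ.map X).map fun y => (inner ℝ y u : ℝ) :=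
    fun u => (Measure.map_map (continuous_id.inner continuous_const).measurable hX).symm
  simp only [h_marginal, cramerE1_map_inner]
  exact iSup_eq_iSup_norm_eq_one_iSup_smul _

/-- For a random vector `X` in `ℝⁿ` with distribution `μ`, the Cramér transform satisfies
`Λ*_X(x) = sup_{‖ξ‖=1} Λ*_{⟨X,ξ⟩}(⟨x,ξ⟩)`. -/
theorem cramer_eq_sup_marginals {n : ℕ} (hn : 0 < n) {Ω : Type*} [MeasurableSpace Ω]
    (ℙ : Measure Ω) [IsProbabilityMeasure ℙ] (X : Ω → EuclideanSpace ℝ (Fin n))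
    (hX : Measurable X) :
    ∀ x : EuclideanSpace ℝ (Fin n),
      cramerE (ℙ.map X) x =
        ⨆ ξ : {ξ : EuclideanSpace ℝ (Fin n) // ‖ξ‖ = 1},
          cramerE1 (ℙ.map fun ω => (inner ℝ (X ω) ξ.1 : ℝ)) (inner ℝ x ξ.1 : ℝ) :=
  cramer_eq_sup_marginals_general hn ℙ X hX
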